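/- arXiv:2202.09758 — 3 statements merged into one kernel-verified Lean document; each statement's English description precedes it below -/
import Mathlib

section
/- For fixed a ∈ (0, 1/2], the function f₁(r) = ((2a-1)/(1-a))·(1-r²)·𝒦ₐ(r) + 2·ℰₐ(r) is strictly decreasing on (0,1), where 𝒦ₐ(r) = (π/2)·₂F₁(a, 1-a; 1; r²) and ℰₐ(r) = (π/2)·₂F₁(a-1, 1-a; 1; r²). -/
open Real Filter Set Topology

/-- Pochhammer symbol (rising factorial) for real `x`. -/
noncomputable def poch (x : ℝ) (n : ℕ) : ℝ := (ascPochhammer ℝ n).eval x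

/-- Generalized complete elliptic integral of the first kind. -/
noncomputable def Ka (a r : ℝ) : ℝ :=
  (π / 2) * ∑' n : ℕ, (poch a n * poch (1 - a) n / (n.factorial : ℝ) ^ 2) * r ^ (2 * n)

/-- Generalized complete elliptic integral of the second kind. -/
noncomputable def Ea (a r : ℝ) : ℝ :=
  (π / 2) * ∑' n : ℕ, (poch (a - 1) n * poch (1 - a) n / (n.factorial : ℝ) ^ 2) * r ^ (2 * n)

/-- Generalized Grötzsch ring function. -/
noncomputable def muG (a r : ℝ) : ℝ :=
  π / (2 * Real.sin (π * a)) * (Ka a (Real.sqrt (1 - r ^ 2)) / Ka a r)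

/-- Generalized Hersch–Pfluger distortion function. -/
noncomputable def phiHP (a K r : ℝ) : ℝ := Function.invFun (muG a) (muG a r / K)

/-- The function mₐ(r). -/
noncomputable def mA (a r : ℝ) : ℝ :=
  2 / (π * Real.sin (π * a)) * (1 - r ^ 2) * Ka a (Real.sqrt (1 - r ^ 2)) * Ka a r

/-- Digamma function (as the logarithmic derivative of Γ). -/
noncomputable def psiDG (x : ℝ) : ℝ := deriv (fun t => Real.log (Real.Gamma t)) x

/-- Ramanujan constant R(a). -/
noncomputable def RamanujanR (a : ℝ) : ℝ :=
  -2 * Real.eulerMascheroniConstant - psiDG a - psiDG (1 - a)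

/-!
With `x = r²`, both `𝒦ₐ` and `ℰₐ` are `π/2` times hypergeometric power series in `x` with
coefficients bounded by `1`. Multiplying the `𝒦ₐ`-series by `1 - x` and collecting terms
writes `f₁` as `π/2` times a constant plus `∑ dₙ xⁿ⁺¹`, and the ratio recursion of the
Pochhammer symbols gives `dₙ` a closed form showing `dₙ < 0` for every `n`. A power series
without constant term and with negative coefficients is strictly decreasing on `[0, 1)`.
-/

lemma poch_succ (x : ℝ) (n : ℕ) : poch x (n + 1) = poch x n * (x + n) := by
  simp [poch, ascPochhammer_succ_right]

lemma poch_succ_left (x : ℝ) (n : ℕ) : poch x (n + 1) = x * poch (x + 1) n := by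
  simp [poch, ascPochhammer_succ_left, Polynomial.eval_comp]

lemma abs_poch_le_factorial {x : ℝ} (hx : |x| ≤ 1) (n : ℕ) : |poch x n| ≤ n.factorial := by
  induction n with
  | zero => simp [poch]
  | succ n ih =>
    have hxn : |x + n| ≤ n + 1 := (abs_add_le x n).trans (by simp; linarith)
    rw [poch_succ, abs_mul, Nat.factorial_succ, Nat.cast_mul, mul_comm]
    push_cast
    exact mul_le_mul hxn ih (abs_nonneg _) (by positivity)

/-- The `n`-th coefficient of the hypergeometric series `₂F₁(a, b; 1; x)`. -/
noncomputable def hypCoeff (a b : ℝ) (n : ℕ) : ℝ :=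
  poch a n * poch b n / (n.factorial : ℝ) ^ 2

@[simp]
lemma hypCoeff_zero (a b : ℝ) : hypCoeff a b 0 = 1 := by
  simp [hypCoeff, poch]

lemma hypCoeff_succ (a b : ℝ) (n : ℕ) :
    hypCoeff a b (n + 1) = (a + n) * (b + n) / (n + 1) ^ 2 * hypCoeff a b n := by
  simp only [hypCoeff, poch_succ, Nat.factorial_succ, Nat.cast_mul, Nat.cast_succ]
  field_simp

lemma hypCoeff_sub_one_succ (a b : ℝ) (n : ℕ) :
    hypCoeff (a - 1) b (n + 1) = (a - 1) * (b + n) / (n + 1) ^ 2 * hypCoeff a b n := by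
  rw [hypCoeff, hypCoeff, poch_succ_left, sub_add_cancel, poch_succ b, Nat.factorial_succ]
  push_cast
  field_simp

section hypCoeff

variable {a b : ℝ}

lemma hypCoeff_pos (ha : 0 < a) (hb : 0 < b) (n : ℕ) : 0 < hypCoeff a b n := by
  have := ascPochhammer_pos n a ha
  have := ascPochhammer_pos n b hb
  unfold hypCoeff poch
  positivity

lemma abs_hypCoeff_le_one (ha : |a| ≤ 1) (hb : |b| ≤ 1) (n : ℕ) : |hypCoeff a b n| ≤ 1 := by
  have hn : (0 : ℝ) < (n.factorial : ℝ) ^ 2 := by positivity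
  rw [hypCoeff, abs_div, abs_mul, abs_of_pos hn, div_le_one hn, sq]
  exact mul_le_mul (abs_poch_le_factorial ha n) (abs_poch_le_factorial hb n) (abs_nonneg _)
    (by positivity)

lemma summable_hypCoeff_mul_pow (ha : |a| ≤ 1) (hb : |b| ≤ 1) {x : ℝ} (hx : |x| < 1) :
    Summable fun n ↦ hypCoeff a b n * x ^ n := by
  refine Summable.of_norm_bounded (summable_geometric_of_lt_one (abs_nonneg x) hx) fun n ↦ ?_
  rw [Real.norm_eq_abs, abs_mul, abs_pow]
  exact mul_le_of_le_one_left (by positivity) (abs_hypCoeff_le_one ha hb n)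

end hypCoeff

lemma Ka_eq_tsum (a r : ℝ) : Ka a r = π / 2 * ∑' n, hypCoeff a (1 - a) n * (r ^ 2) ^ n := by
  simp only [Ka, hypCoeff, pow_mul]

lemma Ea_eq_tsum (a r : ℝ) : Ea a r = π / 2 * ∑' n, hypCoeff (a - 1) (1 - a) n * (r ^ 2) ^ n := by
  simp only [Ea, hypCoeff, pow_mul]

lemma HasSum.one_sub_mul_pow {R : Type*} [CommRing R] [TopologicalSpace R] [IsTopologicalRing R]
    {c : ℕ → R} {x s : R} (h : HasSum (fun n ↦ c n * x ^ n) s) :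
    HasSum (fun n ↦ (c (n + 1) - c n) * x ^ (n + 1)) ((1 - x) * s - c 0) := by
  have htail : HasSum (fun n ↦ c (n + 1) * x ^ (n + 1)) (s - c 0) := by
    simpa using (hasSum_nat_add_iff' 1).mpr h
  rw [show (1 - x) * s - c 0 = s - c 0 - x * s by ring]
  exact (htail.sub (h.mul_left x)).congr_fun fun n ↦ by ring

lemma strictAntiOn_tsum_mul_pow_succ {d : ℕ → ℝ} (hd : ∀ n, d n < 0) {s : Set ℝ}
    (hs : s ⊆ Ici 0) (hsum : ∀ x ∈ s, Summable fun n ↦ d n * x ^ (n + 1)) :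
    StrictAntiOn (fun x ↦ ∑' n, d n * x ^ (n + 1)) s := by
  intro x hx y hy hxy
  have hx0 : 0 ≤ x := hs hx
  refine (hsum y hy).tsum_lt_tsum (i := 0) (fun n ↦ ?_) ?_ (hsum x hx)
  · exact mul_le_mul_of_nonpos_left (by gcongr) (hd n).le
  · exact mul_lt_mul_of_neg_left (by simpa using hxy) (hd 0)

/-- The coefficient of `r ^ (2 * (n + 1))` in `2 f₁(r) / π`. -/
noncomputable def f1Coeff (a : ℝ) (n : ℕ) : ℝ :=
  (2 * a - 1) / (1 - a) * (hypCoeff a (1 - a) (n + 1) - hypCoeff a (1 - a) n)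
    + 2 * hypCoeff (a - 1) (1 - a) (n + 1)

lemma f1Coeff_eq {a : ℝ} (ha : a < 1) (n : ℕ) :
    f1Coeff a n = (a * (1 - a) - (n + 1) * (2 * a ^ 2 - 2 * a + 1))
      / ((1 - a) * (n + 1) ^ 2) * hypCoeff a (1 - a) n := by
  have : 1 - a ≠ 0 := by linarith
  rw [f1Coeff, hypCoeff_succ, hypCoeff_sub_one_succ]
  field_simp
  ring

-- The numerator is negative since `a (1 - a) ≤ 1/4 < 1/2 ≤ 2a² - 2a + 1`.
lemma f1Coeff_neg {a : ℝ} (ha0 : 0 < a) (ha1 : a < 1) (n : ℕ) : f1Coeff a n < 0 := by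
  have h1a : 0 < 1 - a := by linarith
  rw [f1Coeff_eq ha1]
  refine mul_neg_of_neg_of_pos (div_neg_of_neg_of_pos ?_ (by positivity))
    (hypCoeff_pos ha0 (by linarith) n)
  nlinarith [sq_nonneg (a - 1 / 2), (n.cast_nonneg : (0 : ℝ) ≤ n)]

lemma hasSum_f1Coeff {a : ℝ} (ha0 : 0 ≤ a) (ha1 : a ≤ 1) {x : ℝ} (hx : |x| < 1) :
    HasSum (fun n ↦ f1Coeff a n * x ^ (n + 1))
      ((2 * a - 1) / (1 - a) * ((1 - x) * ∑' n, hypCoeff a (1 - a) n * x ^ n - 1)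
        + 2 * (∑' n, hypCoeff (a - 1) (1 - a) n * x ^ n - 1)) := by
  have ha : |a| ≤ 1 := abs_le.2 ⟨by linarith, ha1⟩
  have hb : |1 - a| ≤ 1 := abs_le.2 ⟨by linarith, by linarith⟩
  have ha' : |a - 1| ≤ 1 := abs_le.2 ⟨by linarith, by linarith⟩
  have hK := (summable_hypCoeff_mul_pow ha hb hx).hasSum.one_sub_mul_pow
  have hE := (hasSum_nat_add_iff' 1).mpr (summable_hypCoeff_mul_pow ha' hb hx).hasSum
  simp only [Finset.range_one, Finset.sum_singleton, hypCoeff_zero, pow_zero, mul_one] at hK hE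
  exact ((hK.mul_left _).add (hE.mul_left 2)).congr_fun fun n ↦ by rw [f1Coeff]; ring

lemma f1_eq_tsum {a : ℝ} (ha0 : 0 ≤ a) (ha1 : a ≤ 1) {r : ℝ} (hr : |r| < 1) :
    (2 * a - 1) / (1 - a) * (1 - r ^ 2) * Ka a r + 2 * Ea a r
      = π / 2 * ((2 * a - 1) / (1 - a) + 2 + ∑' n, f1Coeff a n * (r ^ 2) ^ (n + 1)) := by
  have hx : |r ^ 2| < 1 := by rw [abs_pow]; exact pow_lt_one₀ (abs_nonneg r) hr two_ne_zero
  rw [(hasSum_f1Coeff ha0 ha1 hx).tsum_eq, Ka_eq_tsum, Ea_eq_tsum]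
  ring

theorem f1_strictAnti (a : ℝ) (ha : a ∈ Set.Ioc (0:ℝ) (1/2)) :
    StrictAntiOn (fun r : ℝ => ((2*a - 1)/(1 - a)) * (1 - r^2) * Ka a r + 2 * Ea a r)
      (Set.Ioo 0 1) := by
  obtain ⟨ha0, ha1⟩ := ha
  have habs : ∀ t ∈ Ioo (0 : ℝ) 1, |t| < 1 := fun t ht ↦ abs_lt.2 ⟨by linarith [ht.1], ht.2⟩
  have hsq : ∀ t ∈ Ioo (0 : ℝ) 1, t ^ 2 ∈ Ioo (0 : ℝ) 1 :=
    fun t ht ↦ ⟨pow_pos ht.1 2, pow_lt_one₀ ht.1.le ht.2 two_ne_zero⟩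
  have htail := strictAntiOn_tsum_mul_pow_succ (f1Coeff_neg ha0 (by linarith))
    (fun x hx ↦ le_of_lt hx.1)
    fun x hx ↦ (hasSum_f1Coeff ha0.le (by linarith) (habs x hx)).summable
  intro r hr s hs hrs
  beta_reduce
  rw [f1_eq_tsum ha0.le (by linarith) (habs r hr), f1_eq_tsum ha0.le (by linarith) (habs s hs)]
  gcongr ?_ * (_ + ?_)
  exact htail (hsq r hr) (hsq s hs) (by gcongr; exact hr.1.le)
end

section
/- For fixed a ∈ (0, 1/2], the function f₂(r) = (a(2a-1)/(1-a))·(1-r²)·𝒦ₐ(r) + ℰₐ(r) is strictly decreasing on (0,1), and its limit as r → 0⁺ equals π(2a²-2a+1)/(2(1-a)). -/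
open Real Filter Set Topology

lemma poch_zero (x : ℝ) : poch x 0 = 1 := by simp [poch]

lemma poch_shift (a : ℝ) (n : ℕ) : poch (a - 1) (n + 1) = (a - 1) * poch a n := by
  simp [poch, ascPochhammer_succ_left, Polynomial.eval_comp]

lemma poch_pos {x : ℝ} (hx : 0 < x) (n : ℕ) : 0 < poch x n := by
  induction n with
  | zero => simp [poch_zero]
  | succ n ih => rw [poch_succ]; positivity

lemma poch_le_factorial {x : ℝ} (hx0 : 0 ≤ x) (hx1 : x ≤ 1) (n : ℕ) :
    poch x n ≤ (n.factorial : ℝ) := by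
  induction n with
  | zero => simp [poch_zero]
  | succ n ih =>
    rw [poch_succ, Nat.factorial_succ]
    push_cast
    have h1 : 0 ≤ poch x n := by
      clear ih
      induction n with
      | zero => simp [poch_zero]
      | succ m ihm => rw [poch_succ]; have : (0:ℝ) ≤ x + m := by positivity
                      exact mul_nonneg ihm this
    have h2 : x + n ≤ n + 1 := by linarith
    have h3 : (0:ℝ) ≤ x + n := by positivity
    nlinarith [(Nat.cast_pos (α := ℝ)).mpr (Nat.factorial_pos n)]

lemma poch_nonneg {x : ℝ} (hx : 0 ≤ x) (n : ℕ) : 0 ≤ poch x n := by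
  induction n with
  | zero => simp [poch_zero]
  | succ m ihm =>
    rw [poch_succ]
    have : (0:ℝ) ≤ x + m := by positivity
    exact mul_nonneg ihm this

noncomputable def Acoef (a : ℝ) (n : ℕ) : ℝ :=
  poch a n * poch (1 - a) n / (n.factorial : ℝ) ^ 2

noncomputable def Bcoef (a : ℝ) (n : ℕ) : ℝ :=
  poch (a - 1) n * poch (1 - a) n / (n.factorial : ℝ) ^ 2

noncomputable def Acoef' (a : ℝ) : ℕ → ℝ
  | 0 => 0
  | n + 1 => Acoef a n

noncomputable def Ccoef (a : ℝ) (n : ℕ) : ℝ :=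
  (a * (2 * a - 1) / (1 - a)) * (Acoef a n - Acoef' a n) + Bcoef a n

lemma fact_pos (n : ℕ) : (0:ℝ) < (n.factorial : ℝ) :=
  Nat.cast_pos.mpr (Nat.factorial_pos n)

lemma abs_Acoef_le_one {a : ℝ} (ha : a ∈ Set.Ioc (0:ℝ) (1/2)) (n : ℕ) :
    |Acoef a n| ≤ 1 := by
  obtain ⟨ha0, ha1⟩ := ha
  have h1 : (0:ℝ) ≤ 1 - a := by linarith
  have hP0 := poch_nonneg ha0.le n
  have hQ0 := poch_nonneg h1 n
  have hP := poch_le_factorial ha0.le (by linarith) n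
  have hQ := poch_le_factorial h1 (by linarith) n
  have hF := fact_pos n
  rw [Acoef, abs_div, abs_of_nonneg (mul_nonneg hP0 hQ0), abs_of_nonneg (by positivity)]
  rw [div_le_one (by positivity)]
  calc poch a n * poch (1-a) n ≤ (n.factorial:ℝ) * (n.factorial:ℝ) :=
        mul_le_mul hP hQ hQ0 (le_of_lt hF)
    _ = (n.factorial:ℝ)^2 := (sq _).symm

lemma abs_Bcoef_le_one {a : ℝ} (ha : a ∈ Set.Ioc (0:ℝ) (1/2)) (n : ℕ) :
    |Bcoef a n| ≤ 1 := by
  obtain ⟨ha0, ha1⟩ := ha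
  have h1 : (0:ℝ) ≤ 1 - a := by linarith
  have hF := fact_pos n
  rw [Bcoef, abs_div, abs_of_nonneg (by positivity : (0:ℝ) ≤ ((n.factorial:ℝ))^2)]
  rw [div_le_one (by positivity)]
  have hQ0 := poch_nonneg h1 n
  have hQ := poch_le_factorial h1 (by linarith) n
  have hB : |poch (a-1) n| ≤ (n.factorial : ℝ) := by
    cases n with
    | zero => simp [poch_zero]
    | succ m =>
      rw [poch_shift, abs_mul]
      have h2 : |a - 1| ≤ 1 := by rw [abs_le]; constructor <;> linarith
      have h3 : |poch a m| ≤ (m.factorial : ℝ) := by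
        rw [abs_of_nonneg (poch_nonneg ha0.le m)]
        exact poch_le_factorial ha0.le (by linarith) m
      calc |a-1| * |poch a m| ≤ 1 * (m.factorial : ℝ) :=
            mul_le_mul h2 h3 (abs_nonneg _) zero_le_one
        _ = (m.factorial : ℝ) := one_mul _
        _ ≤ ((m+1).factorial : ℝ) := by
            exact_mod_cast Nat.cast_le.mpr (Nat.factorial_le (Nat.le_succ m))
  rw [abs_mul, abs_of_nonneg hQ0]
  calc |poch (a-1) n| * poch (1-a) n ≤ (n.factorial:ℝ) * (n.factorial:ℝ) :=
        mul_le_mul hB hQ hQ0 (le_of_lt hF)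
    _ = (n.factorial:ℝ)^2 := (sq _).symm

lemma abs_Ccoef_le {a : ℝ} (ha : a ∈ Set.Ioc (0:ℝ) (1/2)) (n : ℕ) :
    |Ccoef a n| ≤ |a * (2*a-1)/(1-a)| * 2 + 1 := by
  have hA := abs_Acoef_le_one ha n
  have hB := abs_Bcoef_le_one ha n
  have hA' : |Acoef' a n| ≤ 1 := by
    cases n with
    | zero => simp [Acoef']
    | succ m => exact abs_Acoef_le_one ha m
  have h1 : |Ccoef a n| ≤ |a * (2*a-1)/(1-a)| * |Acoef a n - Acoef' a n| + |Bcoef a n| := by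
    rw [Ccoef]
    refine (abs_add_le _ _).trans ?_
    rw [abs_mul]
  have h : |Acoef a n - Acoef' a n| ≤ |Acoef a n| + |Acoef' a n| := abs_sub _ _
  have h2 : |Acoef a n - Acoef' a n| ≤ 2 := by linarith
  have h3 : (0:ℝ) ≤ |a * (2*a-1)/(1-a)| := abs_nonneg _
  nlinarith [mul_le_mul_of_nonneg_left h2 h3]

lemma summable_aux {f : ℕ → ℝ} {M r : ℝ} (hM : ∀ n, |f n| ≤ M) (hr : |r| < 1) :
    Summable (fun n => f n * r ^ (2 * n)) := by
  have h2 : |r|^2 < 1 := by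
    nlinarith [abs_nonneg r]
  apply Summable.of_abs
  have hg : Summable (fun n : ℕ => M * (|r|^2)^n) :=
    (summable_geometric_of_lt_one (by positivity) h2).mul_left M
  apply Summable.of_nonneg_of_le (fun n => abs_nonneg _) _ hg
  intro n
  rw [abs_mul, abs_pow]
  calc |f n| * |r|^(2*n) ≤ M * |r|^(2*n) :=
        mul_le_mul_of_nonneg_right (hM n) (by positivity)
    _ = M * (|r|^2)^n := by rw [← pow_mul]

lemma f2_repr {a r : ℝ} (ha : a ∈ Set.Ioc (0:ℝ) (1/2)) (hr : |r| < 1) :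
    (a*(2*a - 1)/(1 - a)) * (1 - r^2) * Ka a r + Ea a r
      = (π/2) * ∑' n, Ccoef a n * r ^ (2*n) := by
  set c := a*(2*a - 1)/(1 - a) with hc
  have sA : Summable (fun n => Acoef a n * r ^ (2*n)) :=
    summable_aux (abs_Acoef_le_one ha) hr
  have sB : Summable (fun n => Bcoef a n * r ^ (2*n)) :=
    summable_aux (abs_Bcoef_le_one ha) hr
  have hA'bd : ∀ n, |Acoef' a n| ≤ 1 := by
    intro n
    cases n with
    | zero => simp [Acoef']
    | succ m => exact abs_Acoef_le_one ha m
  have sA' : Summable (fun n => Acoef' a n * r ^ (2*n)) := summable_aux hA'bd hr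
  have hKa : Ka a r = (π/2) * ∑' n, Acoef a n * r ^ (2*n) := rfl
  have hEa : Ea a r = (π/2) * ∑' n, Bcoef a n * r ^ (2*n) := rfl
  have hshift : ∑' n, Acoef' a n * r ^ (2*n) = r^2 * ∑' n, Acoef a n * r ^ (2*n) := by
    rw [Summable.tsum_eq_zero_add sA']
    simp only [Acoef']
    rw [← tsum_mul_left]
    rw [zero_mul, zero_add]
    apply tsum_congr
    intro n
    ring
  have hsum : ∑' n, Ccoef a n * r ^ (2*n)
      = c * (∑' n, Acoef a n * r ^ (2*n)) - c * (∑' n, Acoef' a n * r ^ (2*n))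
        + ∑' n, Bcoef a n * r ^ (2*n) := by
    rw [← tsum_mul_left, ← tsum_mul_left,
      ← Summable.tsum_sub ((sA.mul_left c)) ((sA'.mul_left c)),
      ← Summable.tsum_add (((sA.mul_left c)).sub ((sA'.mul_left c))) sB]
    apply tsum_congr
    intro n
    rw [Ccoef]
    ring
  rw [hKa, hEa, hsum, hshift]
  ring

lemma Ccoef_succ_neg {a : ℝ} (ha : a ∈ Set.Ioc (0:ℝ) (1/2)) (n : ℕ) :
    Ccoef a (n + 1) < 0 := by
  obtain ⟨ha0, ha1⟩ := ha
  have h1a : (0:ℝ) < 1 - a := by linarith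
  set x : ℝ := (n : ℝ) with hx
  have hx0 : (0:ℝ) ≤ x := Nat.cast_nonneg n
  set c := a * (2 * a - 1) / (1 - a) with hc
  set P := poch a n with hP'
  set Q := poch (1 - a) n with hQ'
  have hP : 0 < P := poch_pos ha0 n
  have hQ : 0 < Q := poch_pos (by linarith) n
  set F : ℝ := (n.factorial : ℝ) with hF'
  have hF : 0 < F := fact_pos n
  have e1 : poch a (n+1) = P * (a + x) := poch_succ a n
  have e2 : poch (1-a) (n+1) = Q * (1 - a + x) := poch_succ (1-a) n
  have e3 : poch (a-1) (n+1) = (a-1) * P := poch_shift a n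
  have eF : ((n+1).factorial : ℝ) = (x + 1) * F := by
    rw [Nat.factorial_succ]; push_cast; ring
  have key : c * ((a+x)*(1-a+x) - (x+1)^2) + (a-1)*(1-a+x) < 0 := by
    have hnum : a*(2*a-1)*((a+x)*(1-a+x) - (x+1)^2) + (a-1)*(1-a)*(1-a+x) < 0 := by
      nlinarith [sq_nonneg (a - 1/2), sq_nonneg a, mul_nonneg hx0 (sq_nonneg (a - 1/2)),
        mul_nonneg hx0 ha0.le, sq_nonneg (a*(1-a)), mul_pos ha0 h1a]
    calc c * ((a+x)*(1-a+x) - (x+1)^2) + (a-1)*(1-a+x)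
        = (a*(2*a-1)*((a+x)*(1-a+x) - (x+1)^2) + (a-1)*(1-a)*(1-a+x)) / (1-a) := by
          rw [hc]; field_simp
      _ < 0 := div_neg_of_neg_of_pos hnum h1a
  have hCeq : Ccoef a (n+1)
      = (P * Q / ((x+1)^2 * F^2)) * (c * ((a+x)*(1-a+x) - (x+1)^2) + (a-1)*(1-a+x)) := by
    rw [Ccoef, show Acoef' a (n+1) = Acoef a n from rfl, Acoef, Acoef, Bcoef, e1, e2, e3, eF,
      ← hP', ← hQ', ← hF', ← hc]
    have hx1 : (0:ℝ) < x + 1 := by linarith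
    field_simp
  rw [hCeq]
  apply mul_neg_of_pos_of_neg _ key
  positivity

lemma Ccoef_zero {a : ℝ} (ha : a ∈ Set.Ioc (0:ℝ) (1/2)) :
    Ccoef a 0 = a * (2*a - 1)/(1 - a) + 1 := by
  simp [Ccoef, Acoef', Acoef, Bcoef, poch_zero]

set_option maxHeartbeats 1000000 in
theorem f2_strictAnti_and_limit (a : ℝ) (ha : a ∈ Set.Ioc (0:ℝ) (1/2)) :
    StrictAntiOn (fun r : ℝ => (a*(2*a - 1)/(1 - a)) * (1 - r^2) * Ka a r + Ea a r)
      (Set.Ioo 0 1) ∧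
    Filter.Tendsto (fun r : ℝ => (a*(2*a - 1)/(1 - a)) * (1 - r^2) * Ka a r + Ea a r)
      (nhdsWithin 0 (Set.Ioi 0)) (nhds (π * (2*a^2 - 2*a + 1) / (2 * (1 - a)))) := by
  obtain ⟨ha0, ha1⟩ := ha
  have ha' : a ∈ Set.Ioc (0:ℝ) (1/2) := ⟨ha0, ha1⟩
  have h1a : (0:ℝ) < 1 - a := by linarith
  set M : ℝ := |a * (2*a-1)/(1-a)| * 2 + 1 with hM
  have hM0 : 0 < M := by positivity
  constructor
  · intro r hr s hs hrs
    simp only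
    have hrabs : |r| < 1 := abs_lt.mpr ⟨by linarith [hr.1], hr.2⟩
    have hsabs : |s| < 1 := abs_lt.mpr ⟨by linarith [hs.1], hs.2⟩
    rw [f2_repr ha' hrabs, f2_repr ha' hsabs]
    have sCr : Summable (fun n => Ccoef a n * r ^ (2*n)) :=
      summable_aux (abs_Ccoef_le ha') hrabs
    have sCs : Summable (fun n => Ccoef a n * s ^ (2*n)) :=
      summable_aux (abs_Ccoef_le ha') hsabs
    have hπ : (0:ℝ) < π/2 := by positivity
    apply mul_lt_mul_of_pos_left _ hπ
    apply Summable.tsum_lt_tsum (i := 1) _ _ sCs sCr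
    · intro n
      cases n with
      | zero => simp
      | succ m =>
        have hC := Ccoef_succ_neg ha' m
        have hpow : r ^ (2*(m+1)) ≤ s ^ (2*(m+1)) :=
          pow_le_pow_left₀ hr.1.le hrs.le _
        exact mul_le_mul_of_nonpos_left hpow hC.le
    · have hC := Ccoef_succ_neg ha' 0
      have hpow : r ^ (2*1) < s ^ (2*1) :=
        pow_lt_pow_left₀ hrs hr.1.le (by norm_num)
      exact mul_lt_mul_of_neg_left hpow hC
  · have h0 : Ccoef a 0 = (2*a^2 - 2*a + 1)/(1 - a) := by
      rw [Ccoef_zero ha']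
      field_simp
      ring
    have hL : π * (2*a^2 - 2*a + 1) / (2 * (1 - a)) = (π/2) * Ccoef a 0 := by
      rw [h0, div_mul_div_comm]
    rw [hL]
    rw [← tendsto_sub_nhds_zero_iff]
    apply squeeze_zero_norm' (a := fun r : ℝ => (π/2) * (M * (r^2 * 2)))
    · filter_upwards [Ioo_mem_nhdsGT_of_mem
        (show (0:ℝ) ∈ Set.Ico (0:ℝ) (1/2) by norm_num)] with r hr
      have hr0 : 0 < r := hr.1
      have hr2 : r < 1/2 := hr.2
      have hrabs : |r| < 1 := abs_lt.mpr ⟨by linarith, by linarith⟩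
      have hr2lt : r^2 < 1 := by nlinarith
      have sC : Summable (fun n => Ccoef a n * r ^ (2*n)) :=
        summable_aux (abs_Ccoef_le ha') hrabs
      have hrepr := f2_repr ha' hrabs
      simp only [hrepr]
      have hzero : ∑' n, Ccoef a n * r ^ (2*n)
          = Ccoef a 0 * r ^ (2*0) + ∑' n, Ccoef a (n+1) * r ^ (2*(n+1)) :=
        Summable.tsum_eq_zero_add sC
      have htail : |∑' n, Ccoef a (n+1) * r ^ (2*(n+1))| ≤ M * (r^2 * 2) := by
        have sgeo : Summable (fun n : ℕ => M * r^2 * (r^2)^n) :=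
          (summable_geometric_of_lt_one (by positivity) hr2lt).mul_left _
        have habs : ∀ n : ℕ, |Ccoef a (n+1) * r ^ (2*(n+1))| ≤ M * r^2 * (r^2)^n := by
          intro n
          rw [abs_mul]
          have h1 : |Ccoef a (n+1)| ≤ M := abs_Ccoef_le ha' (n+1)
          have h2 : |r ^ (2*(n+1))| = r^2 * (r^2)^n := by
            rw [abs_pow, abs_of_nonneg hr0.le, ← pow_mul]
            ring
          rw [h2]
          have : (0:ℝ) ≤ r^2 * (r^2)^n := by positivity
          nlinarith [abs_nonneg (Ccoef a (n+1))]
        have habs' : ∀ n : ℕ, ‖Ccoef a (n+1) * r ^ (2*(n+1))‖ ≤ M * r^2 * (r^2)^n := by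
          intro n
          rw [Real.norm_eq_abs]
          exact habs n
        have sabs : Summable (fun n => ‖Ccoef a (n+1) * r ^ (2*(n+1))‖) :=
          Summable.of_nonneg_of_le (fun n => norm_nonneg _) habs' sgeo
        calc |∑' n, Ccoef a (n+1) * r ^ (2*(n+1))|
            = ‖∑' n, Ccoef a (n+1) * r ^ (2*(n+1))‖ := (Real.norm_eq_abs _).symm
          _ ≤ ∑' n, ‖Ccoef a (n+1) * r ^ (2*(n+1))‖ := norm_tsum_le_tsum_norm sabs
          _ ≤ ∑' n : ℕ, M * r^2 * (r^2)^n := Summable.tsum_le_tsum habs' sabs sgeo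
          _ = M * r^2 * (1 - r^2)⁻¹ := by
              rw [tsum_mul_left, tsum_geometric_of_lt_one (by positivity) hr2lt]
          _ ≤ M * (r^2 * 2) := by
              have h34 : (1:ℝ) - r^2 ≥ 3/4 := by nlinarith
              have : (1 - r^2)⁻¹ ≤ 2 := by
                rw [inv_le_comm₀ (by linarith) (by norm_num)]
                linarith
              have hMr : (0:ℝ) ≤ M * r^2 := by positivity
              have h5 := mul_le_mul_of_nonneg_left this hMr
              nlinarith [h5]
      have : (π/2) * ∑' n, Ccoef a n * r ^ (2*n) - (π/2) * Ccoef a 0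
          = (π/2) * ∑' n, Ccoef a (n+1) * r ^ (2*(n+1)) := by
        rw [hzero]
        simp only [Nat.mul_zero, pow_zero, mul_one]
        ring
      rw [this]
      rw [Real.norm_eq_abs, abs_mul, abs_of_nonneg (by positivity : (0:ℝ) ≤ π/2)]
      exact mul_le_mul_of_nonneg_left htail (by positivity)
    · have : Filter.Tendsto (fun r : ℝ => (π/2) * (M * (r^2 * 2))) (nhds 0) (nhds 0) := by
        have hc : Continuous (fun r : ℝ => (π/2) * (M * (r^2 * 2))) := by continuity
        have := hc.tendsto 0
        simpa using this
      exact this.mono_left nhdsWithin_le_nhds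
end

section
/- For the Grötzsch ring function μ (case a = 1/2), the strict superadditivity inequality μ(r) + μ(t) > μ(rt) holds for all r, t ∈ (0,1). -/
/-!
Write `m = r²` and `F m = ₂F₁(1/2, 1/2; 1; m)`, so that `μ(r) = (π/2) G(m)` with
`G m = F (1 - m) / F m`. Both `F m` and `F (1 - m)` solve the hypergeometric equation
`(m (1 - m) F')' = F / 4`, so `W = m (1 - m) (F'(1 - m) F(m) + F(1 - m) F'(m))` is a positive
constant and `m G'(m) = -W / ((1 - m) F(m)²)`. Comparing coefficients gives `F > 2 (1 - m) F'`,
i.e. `(1 - m) F²` decreases, hence so does `m G'(m)`: `x ↦ G (exp (-x))` is strictly concave.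
As `F m → ∞` when `m → 1`, it tends to `0` at `x = 0`, so it is strictly subadditive, which is
`G (u v) < G u + G v`.
-/

open Real Filter Set Topology

def PolyBounded (a : ℕ → ℝ) : Prop :=
  ∃ C : ℝ, ∃ k : ℕ, ∀ n, |a n| ≤ C * ((n : ℝ) + 1) ^ k

noncomputable def powerSeriesSum (a : ℕ → ℝ) (x : ℝ) : ℝ := ∑' n, a n * x ^ n

def derivCoeff (a : ℕ → ℝ) (n : ℕ) : ℝ := (n + 1) * a (n + 1)

lemma summable_succ_pow_mul_geometric (k : ℕ) {r : ℝ} (hr : |r| < 1) :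
    Summable fun n : ℕ => ((n : ℝ) + 1) ^ k * r ^ n := by
  simp_rw [add_pow, one_pow, mul_one, Finset.sum_mul]
  refine summable_sum fun j _ => ?_
  simpa only [mul_right_comm] using
    (summable_pow_mul_geometric_of_norm_lt_one j (r := r) (by simpa using hr)).mul_right
      (k.choose j : ℝ)

lemma abs_lt_one_of_mem_Ico {x : ℝ} (hx : x ∈ Ico (0 : ℝ) 1) : |x| < 1 :=
  abs_lt.2 ⟨by linarith [hx.1], hx.2⟩

lemma one_sub_mem_Ioo {x : ℝ} (hx : x ∈ Ioo (0 : ℝ) 1) : 1 - x ∈ Ioo (0 : ℝ) 1 :=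
  ⟨sub_pos.2 hx.2, sub_lt_self 1 hx.1⟩

lemma natCast_mul_pow_pred_le {y ρ : ℝ} (hρ : 0 < ρ) (hy : |y| ≤ ρ) (n : ℕ) :
    (n : ℝ) * |y| ^ (n - 1) ≤ ((n : ℝ) + 1) * ρ ^ n / ρ := by
  rcases n with _ | n
  · simp only [CharP.cast_eq_zero, zero_mul, zero_add, pow_zero, one_mul]
    positivity
  · rw [Nat.add_sub_cancel, pow_succ, mul_div_assoc, mul_div_cancel_right₀ _ hρ.ne']
    push_cast
    gcongr
    linarith

lemma polyBounded_of_abs_le {a : ℕ → ℝ} {C : ℝ} (h : ∀ n, |a n| ≤ C) : PolyBounded a :=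
  ⟨C, 0, by simpa using h⟩

namespace PolyBounded

variable {a b : ℕ → ℝ}

lemma summable (ha : PolyBounded a) {x : ℝ} (hx : |x| < 1) : Summable fun n => a n * x ^ n := by
  obtain ⟨C, k, hC⟩ := ha
  refine .of_norm_bounded
    ((summable_succ_pow_mul_geometric k (r := |x|) (by rwa [abs_abs])).mul_left C) fun n => ?_
  rw [norm_mul, norm_pow, Real.norm_eq_abs, Real.norm_eq_abs, ← mul_assoc]
  exact mul_le_mul_of_nonneg_right (hC n) (by positivity)

lemma derivCoeff (ha : PolyBounded a) : PolyBounded (derivCoeff a) := by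
  obtain ⟨C, k, hC⟩ := ha
  refine ⟨2 ^ k * C, k + 1, fun n => ?_⟩
  have hC0 : 0 ≤ C := (abs_nonneg _).trans ((hC 0).trans (by simp))
  calc |_root_.derivCoeff a n| = ((n : ℝ) + 1) * |a (n + 1)| := by
        rw [_root_.derivCoeff, abs_mul, abs_of_pos (by positivity)]
    _ ≤ ((n : ℝ) + 1) * (C * (2 * ((n : ℝ) + 1)) ^ k) := by
        gcongr
        refine (hC _).trans ?_
        gcongr
        push_cast
        linarith
    _ = 2 ^ k * C * ((n : ℝ) + 1) ^ (k + 1) := by rw [mul_pow]; ring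

lemma natCast_mul (ha : PolyBounded a) : PolyBounded fun n => n * a n := by
  obtain ⟨C, k, hC⟩ := ha
  refine ⟨C, k + 1, fun n => ?_⟩
  calc |(n : ℝ) * a n| ≤ ((n : ℝ) + 1) * (C * ((n : ℝ) + 1) ^ k) := by
        rw [abs_mul, Nat.abs_cast]
        exact mul_le_mul (by linarith) (hC n) (abs_nonneg _) (by positivity)
    _ = C * ((n : ℝ) + 1) ^ (k + 1) := by ring

lemma const_mul (ha : PolyBounded a) (r : ℝ) : PolyBounded fun n => r * a n := by
  obtain ⟨C, k, hC⟩ := ha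
  refine ⟨|r| * C, k, fun n => ?_⟩
  rw [abs_mul, mul_assoc]
  exact mul_le_mul_of_nonneg_left (hC n) (abs_nonneg r)

end PolyBounded

section PowerSeriesSum

variable {a b : ℕ → ℝ} {x : ℝ}

lemma powerSeriesSum_add (ha : PolyBounded a) (hb : PolyBounded b) (hx : |x| < 1) :
    powerSeriesSum (fun n => a n + b n) x = powerSeriesSum a x + powerSeriesSum b x := by
  simp only [powerSeriesSum, add_mul]
  exact (ha.summable hx).tsum_add (hb.summable hx)

lemma powerSeriesSum_sub (ha : PolyBounded a) (hb : PolyBounded b) (hx : |x| < 1) :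
    powerSeriesSum (fun n => a n - b n) x = powerSeriesSum a x - powerSeriesSum b x := by
  simp only [powerSeriesSum, sub_mul]
  exact (ha.summable hx).tsum_sub (hb.summable hx)

lemma powerSeriesSum_const_mul (r : ℝ) :
    powerSeriesSum (fun n => r * a n) x = r * powerSeriesSum a x := by
  simp only [powerSeriesSum, mul_assoc]
  exact tsum_mul_left

lemma mul_powerSeriesSum_derivCoeff (ha : PolyBounded a) (hx : |x| < 1) :
    x * powerSeriesSum (derivCoeff a) x = powerSeriesSum (fun n => n * a n) x := by
  rw [powerSeriesSum, powerSeriesSum, (ha.natCast_mul.summable hx).tsum_eq_zero_add,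
    ← tsum_mul_left]
  simp only [derivCoeff, CharP.cast_eq_zero, zero_mul, zero_add, Nat.cast_succ]
  congr 1 with n
  ring

lemma powerSeriesSum_pos (ha : PolyBounded a) (hnn : ∀ n, 0 ≤ a n) (ha0 : 0 < a 0)
    (hx : x ∈ Ico (0 : ℝ) 1) : 0 < powerSeriesSum a x := by
  calc 0 < a 0 * x ^ 0 := by simpa using ha0
    _ ≤ powerSeriesSum a x :=
        (ha.summable (abs_lt_one_of_mem_Ico hx)).le_tsum 0 fun n _ =>
          mul_nonneg (hnn n) (pow_nonneg hx.1 n)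

lemma hasDerivAt_powerSeriesSum (ha : PolyBounded a) (hx : |x| < 1) :
    HasDerivAt (powerSeriesSum a) (powerSeriesSum (derivCoeff a) x) x := by
  obtain ⟨ρ, hxρ, hρ1⟩ := exists_between hx
  have hρ0 : 0 < ρ := (abs_nonneg x).trans_lt hxρ
  have hsum0 := ha.summable (x := 0) (by simp)
  obtain ⟨C, k, hC⟩ := ha
  have hC0 : 0 ≤ C := (abs_nonneg _).trans ((hC 0).trans (by simp))
  set u : ℕ → ℝ := fun n => C / ρ * (((n : ℝ) + 1) ^ (k + 1) * ρ ^ n)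
  have hu : Summable u :=
    (summable_succ_pow_mul_geometric (k + 1) (by rwa [abs_of_pos hρ0])).mul_left _
  have hbound : ∀ n, ∀ y ∈ Ioo (-ρ) ρ, ‖a n * (n * y ^ (n - 1))‖ ≤ u n := by
    intro n y hy
    have hpow := natCast_mul_pow_pred_le hρ0 (abs_lt.2 hy).le n
    calc ‖a n * (n * y ^ (n - 1))‖ = |a n| * (n * |y| ^ (n - 1)) := by
          rw [Real.norm_eq_abs, abs_mul, abs_mul, abs_pow, Nat.abs_cast]
      _ ≤ C * ((n : ℝ) + 1) ^ k * (((n : ℝ) + 1) * ρ ^ n / ρ) := by gcongr; exact hC n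
      _ = u n := by simp only [u]; ring
  have hderiv := hasDerivAt_tsum_of_isPreconnected hu isOpen_Ioo isPreconnected_Ioo
    (fun n y _ => (hasDerivAt_pow n y).const_mul (a n)) hbound
    (show (0 : ℝ) ∈ Ioo (-ρ) ρ from ⟨by linarith, hρ0⟩) hsum0 (abs_lt.1 hxρ)
  have hsum : Summable fun n => a n * (n * x ^ (n - 1)) :=
    .of_norm_bounded hu fun n => hbound n x (abs_lt.1 hxρ)
  have hshift : powerSeriesSum (derivCoeff a) x = ∑' n, a n * (n * x ^ (n - 1)) := by
    rw [hsum.tsum_eq_zero_add, powerSeriesSum]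
    simp only [derivCoeff, CharP.cast_eq_zero, zero_mul, mul_zero, zero_add, Nat.add_sub_cancel]
    congr 1 with n
    push_cast
    ring
  rw [hshift]
  exact hderiv

lemma tendsto_powerSeriesSum_atTop (ha : PolyBounded a) (hnn : ∀ n, 0 ≤ a n)
    (hdiv : ¬Summable a) : Tendsto (powerSeriesSum a) (𝓝[<] 1) atTop := by
  refine tendsto_atTop.2 fun B => ?_
  obtain ⟨N, hN⟩ :=
    (((not_summable_iff_tendsto_nat_atTop_of_nonneg hnn).1 hdiv).eventually_gt_atTop B).exists
  have hpoly : Tendsto (fun y : ℝ => ∑ n ∈ Finset.range N, a n * y ^ n) (𝓝[<] 1)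
      (𝓝 (∑ n ∈ Finset.range N, a n)) := by
    have hcont : Continuous fun y : ℝ => ∑ n ∈ Finset.range N, a n * y ^ n := by fun_prop
    simpa using (hcont.tendsto 1).mono_left nhdsWithin_le_nhds
  filter_upwards [hpoly.eventually_const_lt hN, Ioo_mem_nhdsLT zero_lt_one] with y hBy hy
  have hy' := abs_lt_one_of_mem_Ico (Ioo_subset_Ico_self hy)
  exact hBy.le.trans <| (ha.summable hy').sum_le_tsum _ fun n _ =>
    mul_nonneg (hnn n) (pow_nonneg hy.1.le n)

end PowerSeriesSum

lemma StrictAntiOn.lt_of_tendsto_nhdsLT {f : ℝ → ℝ} {a b L x : ℝ}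
    (hf : StrictAntiOn f (Ioo a b)) (hlim : Tendsto f (𝓝[<] b) (𝓝 L)) (hx : x ∈ Ioo a b) :
    L < f x := by
  obtain ⟨y, hxy, hyb⟩ := exists_between hx.2
  have hy : y ∈ Ioo a b := ⟨hx.1.trans hxy, hyb⟩
  have hLy : L ≤ f y := le_of_tendsto hlim <| by
    filter_upwards [Ioo_mem_nhdsLT hyb] with z hz
    exact (hf hy ⟨hy.1.trans hz.1, hz.2⟩ hz.1).le
  exact hLy.trans_lt (hf hx hy hxy)

lemma map_mul_lt_add_of_strictAntiOn_mul_deriv {g g' : ℝ → ℝ}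
    (hg : ∀ x ∈ Ioo (0 : ℝ) 1, HasDerivAt g (g' x) x)
    (hg' : StrictAntiOn (fun x => x * g' x) (Ioo 0 1)) (hlim : Tendsto g (𝓝[<] 1) (𝓝 0))
    {u v : ℝ} (hu : u ∈ Ioo (0 : ℝ) 1) (hv : v ∈ Ioo (0 : ℝ) 1) :
    g (u * v) < g u + g v := by
  have hmem : ∀ {w}, w ∈ Ioo (0 : ℝ) 1 → u * w ∈ Ioo (0 : ℝ) 1 := fun hw =>
    ⟨mul_pos hu.1 hw.1, mul_lt_one_of_nonneg_of_lt_one_left hu.1.le hu.2 hw.2.le⟩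
  -- `h` decreases to `0` at `1⁻` because `w g'(w) < (u w) g'(u w)`.
  set h := fun w => g u + g w - g (u * w) with h_def
  have hh : ∀ w ∈ Ioo (0 : ℝ) 1, HasDerivAt h (g' w - g' (u * w) * u) w := fun w hw =>
    ((hg w hw).const_add (g u)).sub <|
      (hg _ (hmem hw)).comp w (by simpa using (hasDerivAt_id w).const_mul u)
  have hanti : StrictAntiOn h (Ioo 0 1) := by
    refine strictAntiOn_of_deriv_neg (convex_Ioo 0 1)
      (fun w hw => (hh w hw).continuousAt.continuousWithinAt) fun w hw => ?_
    rw [interior_Ioo] at hw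
    rw [(hh w hw).deriv]
    have hmono := hg' (hmem hw) hw (mul_lt_of_lt_one_left hw.1 hu.2)
    simp only at hmono
    rw [← mul_lt_mul_iff_of_pos_left hw.1]
    nlinarith
  have hlim_h : Tendsto h (𝓝[<] 1) (𝓝 0) := by
    have hcomp : Tendsto (fun w => g (u * w)) (𝓝[<] 1) (𝓝 (g u)) :=
      (hg u hu).continuousAt.tendsto.comp <|
        ((continuous_const_mul u).tendsto' 1 u (mul_one u)).mono_left nhdsWithin_le_nhds
    simpa [h_def] using ((tendsto_const_nhds (x := g u)).add hlim).sub hcomp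
  have := hanti.lt_of_tendsto_nhdsLT hlim_h hv
  simp only [h_def] at this
  linarith

namespace Grotzsch

noncomputable def coeff (n : ℕ) : ℝ := (poch (1 / 2) n / n.factorial) ^ 2

/-- `F m = ₂F₁(1/2, 1/2; 1; m)`, so that `Ka (1/2) r = π / 2 * F (r ^ 2)`. -/
noncomputable def F : ℝ → ℝ := powerSeriesSum coeff

noncomputable def F' : ℝ → ℝ := powerSeriesSum (derivCoeff coeff)

noncomputable def flux (m : ℝ) : ℝ := m * (1 - m) * F' m

noncomputable def fluxCoeff (n : ℕ) : ℝ := coeff n / (4 * (n + 1))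

noncomputable def wronskian (m : ℝ) : ℝ := flux (1 - m) * F m + F (1 - m) * flux m

noncomputable def ratio (m : ℝ) : ℝ := F (1 - m) / F m

lemma coeff_zero : coeff 0 = 1 := by simp [coeff, poch]

lemma coeff_pos (n : ℕ) : 0 < coeff n := by
  have := ascPochhammer_pos n (1 / 2 : ℝ) (by norm_num)
  unfold coeff poch
  positivity

lemma succ_sq_mul_coeff_succ (n : ℕ) :
    ((n : ℝ) + 1) ^ 2 * coeff (n + 1) = ((n : ℝ) + 1 / 2) ^ 2 * coeff n := by
  simp only [coeff, poch, ascPochhammer_succ_eval, Nat.factorial_succ, Nat.cast_mul]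
  field_simp
  push_cast
  ring

lemma coeff_succ_le (n : ℕ) : coeff (n + 1) ≤ coeff n := by
  have h := succ_sq_mul_coeff_succ n
  have := coeff_pos n
  have := coeff_pos (n + 1)
  nlinarith [(n.cast_nonneg : (0 : ℝ) ≤ n)]

lemma coeff_le_one (n : ℕ) : coeff n ≤ 1 :=
  coeff_zero ▸ antitone_nat_of_succ_le coeff_succ_le n.zero_le

lemma one_le_four_mul_coeff_succ (n : ℕ) : 1 ≤ 4 * ((n : ℝ) + 1) * coeff (n + 1) := by
  induction n with
  | zero =>
    have := succ_sq_mul_coeff_succ 0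
    rw [coeff_zero] at this
    norm_num at this ⊢
    linarith
  | succ n ih =>
    have h := succ_sq_mul_coeff_succ (n + 1)
    have := coeff_pos (n + 1)
    push_cast at h ⊢
    nlinarith [(n.cast_nonneg : (0 : ℝ) ≤ n)]

lemma not_summable_coeff : ¬Summable coeff := fun h => by
  have hharm : Summable fun n : ℕ => 1 / ((n + 1 : ℕ) : ℝ) := by
    refine .of_nonneg_of_le (fun n => by positivity) (fun n => ?_)
      (((summable_nat_add_iff 1).2 h).mul_left 4)
    have := one_le_four_mul_coeff_succ n
    rw [div_le_iff₀ (by positivity)]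
    push_cast
    linarith
  exact Real.not_summable_one_div_natCast ((summable_nat_add_iff 1).1 hharm)

lemma polyBounded_coeff : PolyBounded coeff :=
  polyBounded_of_abs_le fun n => (abs_of_pos (coeff_pos n)).trans_le (coeff_le_one n)

lemma fluxCoeff_pos (n : ℕ) : 0 < fluxCoeff n := by
  have := coeff_pos n
  unfold fluxCoeff
  positivity

lemma fluxCoeff_le_coeff (n : ℕ) : fluxCoeff n ≤ coeff n :=
  div_le_self (coeff_pos n).le (by linarith [(n.cast_nonneg : (0 : ℝ) ≤ n)])

lemma polyBounded_fluxCoeff : PolyBounded fluxCoeff :=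
  polyBounded_of_abs_le fun n =>
    (abs_of_pos (fluxCoeff_pos n)).trans_le ((fluxCoeff_le_coeff n).trans (coeff_le_one n))

lemma F_pos {m : ℝ} (hm : m ∈ Ico (0 : ℝ) 1) : 0 < F m :=
  powerSeriesSum_pos polyBounded_coeff (fun n => (coeff_pos n).le) (coeff_pos 0) hm

lemma hasDerivAt_F {m : ℝ} (hm : |m| < 1) : HasDerivAt F (F' m) m :=
  hasDerivAt_powerSeriesSum polyBounded_coeff hm

lemma tendsto_F_atTop : Tendsto F (𝓝[<] 1) atTop :=
  tendsto_powerSeriesSum_atTop polyBounded_coeff (fun n => (coeff_pos n).le) not_summable_coeff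

lemma one_sub_mul_F' {m : ℝ} (hm : |m| < 1) : (1 - m) * F' m = powerSeriesSum fluxCoeff m := by
  rw [sub_mul, one_mul, F', mul_powerSeriesSum_derivCoeff polyBounded_coeff hm,
    ← powerSeriesSum_sub polyBounded_coeff.derivCoeff polyBounded_coeff.natCast_mul hm]
  congr 1 with n
  have h := succ_sq_mul_coeff_succ n
  simp only [derivCoeff, fluxCoeff]
  field_simp
  linear_combination 4 * h

lemma flux_eq {m : ℝ} (hm : |m| < 1) : flux m = m * powerSeriesSum fluxCoeff m := by
  rw [flux, mul_assoc, one_sub_mul_F' hm]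

lemma flux_pos {m : ℝ} (hm : m ∈ Ioo (0 : ℝ) 1) : 0 < flux m := by
  rw [flux_eq (abs_lt_one_of_mem_Ico (Ioo_subset_Ico_self hm))]
  exact mul_pos hm.1 (powerSeriesSum_pos polyBounded_fluxCoeff (fun n => (fluxCoeff_pos n).le)
    (fluxCoeff_pos 0) ⟨hm.1.le, hm.2⟩)

lemma hasDerivAt_flux {m : ℝ} (hm : |m| < 1) : HasDerivAt flux (F m / 4) m := by
  have hd := polyBounded_fluxCoeff
  have hflux : (fun y => y * powerSeriesSum fluxCoeff y) =ᶠ[𝓝 m] flux := by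
    filter_upwards [(isOpen_lt continuous_abs continuous_const).mem_nhds hm] with y hy
    exact (flux_eq hy).symm
  refine (((hasDerivAt_id m).mul (hasDerivAt_powerSeriesSum hd hm)).congr_of_eventuallyEq
    hflux.symm).congr_deriv ?_
  rw [id, one_mul, mul_powerSeriesSum_derivCoeff hd hm,
    ← powerSeriesSum_add hd hd.natCast_mul hm, div_eq_inv_mul, F, ← powerSeriesSum_const_mul]
  congr 1 with n
  simp only [fluxCoeff]
  field_simp
  ring

lemma hasDerivAt_wronskian {m : ℝ} (hm : m ∈ Ioo (0 : ℝ) 1) : HasDerivAt wronskian 0 m := by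
  have h₁ := abs_lt_one_of_mem_Ico (Ioo_subset_Ico_self hm)
  have h₂ := abs_lt_one_of_mem_Ico (Ioo_subset_Ico_self (one_sub_mem_Ioo hm))
  have hW := (((hasDerivAt_flux h₂).comp_const_sub 1 m).mul (hasDerivAt_F h₁)).add
    (((hasDerivAt_F h₂).comp_const_sub 1 m).mul (hasDerivAt_flux h₁))
  refine hW.congr_deriv ?_
  simp only [flux]
  ring

lemma wronskian_pos {m : ℝ} (hm : m ∈ Ioo (0 : ℝ) 1) : 0 < wronskian m := by
  have hm' := one_sub_mem_Ioo hm
  have := flux_pos hm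
  have := flux_pos hm'
  have := F_pos ⟨hm.1.le, hm.2⟩
  have := F_pos ⟨hm'.1.le, hm'.2⟩
  unfold wronskian
  positivity

lemma wronskian_eq_wronskian_half {m : ℝ} (hm : m ∈ Ioo (0 : ℝ) 1) :
    wronskian m = wronskian (1 / 2) :=
  isOpen_Ioo.is_const_of_deriv_eq_zero isPreconnected_Ioo
    (fun x hx => (hasDerivAt_wronskian hx).differentiableAt.differentiableWithinAt)
    (fun x hx => (hasDerivAt_wronskian hx).deriv) hm (by norm_num)

lemma F_sub_two_mul_powerSeriesSum_fluxCoeff_pos {m : ℝ} (hm : m ∈ Ico (0 : ℝ) 1) :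
    0 < F m - 2 * powerSeriesSum fluxCoeff m := by
  have h₁ := abs_lt_one_of_mem_Ico hm
  have hbound : PolyBounded fun n => coeff n - 2 * fluxCoeff n := polyBounded_of_abs_le (C := 3)
    fun n => by
      have := fluxCoeff_pos n
      have := fluxCoeff_le_coeff n
      have := coeff_le_one n
      rw [abs_le]
      constructor <;> linarith
  have hcoeff : ∀ n, coeff n - 2 * fluxCoeff n = coeff n * ((2 * n + 1) / (2 * n + 2)) := by
    intro n
    simp only [fluxCoeff]
    field_simp
    ring
  rw [F, ← powerSeriesSum_const_mul, ← powerSeriesSum_sub polyBounded_coeff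
    (polyBounded_fluxCoeff.const_mul 2) h₁]
  refine powerSeriesSum_pos hbound (fun n => ?_) ?_ hm
  · rw [hcoeff]
    have := coeff_pos n
    positivity
  · rw [hcoeff, coeff_zero]
    norm_num

lemma strictAntiOn_one_sub_mul_F_sq :
    StrictAntiOn (fun m => (1 - m) * F m ^ 2) (Ioo (0 : ℝ) 1) := by
  have hderiv : ∀ m ∈ Ioo (0 : ℝ) 1,
      HasDerivAt (fun m => (1 - m) * F m ^ 2) (-(F m * (F m - 2 * ((1 - m) * F' m)))) m := by
    intro m hm
    refine (((hasDerivAt_id m).const_sub 1).mul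
      ((hasDerivAt_F (abs_lt_one_of_mem_Ico (Ioo_subset_Ico_self hm))).pow 2)).congr_deriv ?_
    simp only [id, Pi.pow_apply]
    ring
  refine strictAntiOn_of_deriv_neg (convex_Ioo 0 1)
    (fun m hm => (hderiv m hm).continuousAt.continuousWithinAt) fun m hm => ?_
  rw [interior_Ioo] at hm
  have hm' : m ∈ Ico (0 : ℝ) 1 := Ioo_subset_Ico_self hm
  rw [(hderiv m hm).deriv, one_sub_mul_F' (abs_lt_one_of_mem_Ico hm'), neg_neg_iff_pos]
  exact mul_pos (F_pos hm') (F_sub_two_mul_powerSeriesSum_fluxCoeff_pos hm')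

lemma hasDerivAt_ratio {m : ℝ} (hm : m ∈ Ioo (0 : ℝ) 1) :
    HasDerivAt ratio (-wronskian m / (m * ((1 - m) * F m ^ 2))) m := by
  have h₁ := abs_lt_one_of_mem_Ico (Ioo_subset_Ico_self hm)
  have h₂ := abs_lt_one_of_mem_Ico (Ioo_subset_Ico_self (one_sub_mem_Ioo hm))
  have hF := (F_pos ⟨hm.1.le, hm.2⟩).ne'
  have hm₀ := hm.1.ne'
  have hm₁ : 1 - m ≠ 0 := by linarith [hm.2]
  refine (((hasDerivAt_F h₂).comp_const_sub 1 m).div (hasDerivAt_F h₁) hF).congr_deriv ?_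
  simp only [wronskian, flux]
  field_simp
  ring

lemma tendsto_ratio_nhdsLT_one : Tendsto ratio (𝓝[<] 1) (𝓝 0) := by
  have hnum : Tendsto (fun m => F (1 - m)) (𝓝[<] 1) (𝓝 (F 0)) :=
    (hasDerivAt_F (by simp)).continuousAt.tendsto.comp <|
      ((continuous_const.sub continuous_id).tendsto' 1 0 (sub_self 1)).mono_left nhdsWithin_le_nhds
  exact hnum.div_atTop tendsto_F_atTop

lemma ratio_mul_lt_add {u v : ℝ} (hu : u ∈ Ioo (0 : ℝ) 1) (hv : v ∈ Ioo (0 : ℝ) 1) :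
    ratio (u * v) < ratio u + ratio v := by
  refine map_mul_lt_add_of_strictAntiOn_mul_deriv (fun m hm => hasDerivAt_ratio hm)
    (fun a ha b hb hab => ?_) tendsto_ratio_nhdsLT_one hu hv
  have hW := wronskian_pos ha
  have hMb : 0 < (1 - b) * F b ^ 2 := by
    have := F_pos ⟨hb.1.le, hb.2⟩
    have : 0 < 1 - b := by linarith [hb.2]
    positivity
  simp only
  rw [← mul_div_assoc, ← mul_div_assoc, mul_div_mul_left _ _ ha.1.ne',
    mul_div_mul_left _ _ hb.1.ne', wronskian_eq_wronskian_half hb,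
    ← wronskian_eq_wronskian_half ha, neg_div, neg_div, neg_lt_neg_iff]
  exact div_lt_div_of_pos_left hW hMb (strictAntiOn_one_sub_mul_F_sq ha hb hab)

lemma Ka_half_eq (r : ℝ) : Ka (1 / 2) r = π / 2 * F (r ^ 2) := by
  rw [Ka, F, powerSeriesSum, show (1 : ℝ) - 1 / 2 = 1 / 2 by norm_num]
  congr 1
  refine tsum_congr fun n => ?_
  rw [coeff, pow_mul]
  ring

lemma muG_half_eq {r : ℝ} (hr : r ^ 2 ≤ 1) : muG (1 / 2) r = π / 2 * ratio (r ^ 2) := by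
  rw [muG, Ka_half_eq, Ka_half_eq, Real.sq_sqrt (by linarith), show π * (1 / 2) = π / 2 by ring,
    Real.sin_pi_div_two, mul_one, mul_div_mul_left _ _ (by positivity), ratio]

end Grotzsch

theorem mu_superadditive (r t : ℝ) (hr : r ∈ Set.Ioo (0:ℝ) 1) (ht : t ∈ Set.Ioo (0:ℝ) 1) :
    muG (1/2) (r * t) < muG (1/2) r + muG (1/2) t := by
  have hsq : ∀ {x : ℝ}, x ∈ Ioo (0 : ℝ) 1 → x ^ 2 ∈ Ioo (0 : ℝ) 1 := fun hx =>
    ⟨pow_pos hx.1 2, pow_lt_one₀ hx.1.le hx.2 two_ne_zero⟩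
  have hrt : (r * t) ^ 2 ≤ 1 := by
    rw [mul_pow]
    exact mul_le_one₀ (hsq hr).2.le (hsq ht).1.le (hsq ht).2.le
  rw [Grotzsch.muG_half_eq hrt, Grotzsch.muG_half_eq (hsq hr).2.le,
    Grotzsch.muG_half_eq (hsq ht).2.le, mul_pow, ← mul_add]
  exact mul_lt_mul_of_pos_left (Grotzsch.ratio_mul_lt_add (hsq hr) (hsq ht)) (by positivity)
end
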